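/- arXiv:1804.03630 — 6 statements merged into one kernel-verified Lean document; each statement's English description precedes it below -/
import Mathlib

section
/- For all variables X_1,...,X_n, the following polynomial identity holds: ∏_{1≤i<j≤n}(1+X_i+X_j) · (1 - ∏_{i=1}^n X_i) = Σ_{k=1}^n (1-X_k) · ∏_{1≤i≤n, i≠k} [(1+X_i+X_i X_k)(1-X_i X_k) X_i / (X_i-X_k)] · ∏_{1≤i<j≤n, i,j≠k}(1+X_i+X_j). -/
/-!
Put `z i = -x i (1 + x i)` and `Q w = ∏ i, x i (1 + x i + x i ^ 2 w)`, a polynomial of degree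
at most `n`. By the Lagrange formula for the coefficient of `w ^ (n + 1)`, the residues of
`Q w / ((w - 1) w ∏ i, (w - z i))` at its `n + 2` simple poles sum to zero. The poles `1` and `0`
contribute `∏ i, x i` and `-1`. At `z k`, the factorizations
`1 + x i - x i ^ 2 x k (1 + x k) = (1 + x i + x i x k) (1 - x i x k)` and
`z k - z i = (x i - x k) (1 + x i + x k)` show that `∏ i < j, (1 + x i + x j)` times the residue is
the `k`-th summand of the right-hand side.
-/

open Finset Polynomial

theorem prod_prod_Ioi_eq_prod_prod_erase_mul {ι M : Type*} [LinearOrder ι] [Fintype ι]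
    [LocallyFiniteOrderTop ι] [CommMonoid M] {f : ι → ι → M} (hf : ∀ i j, f i j = f j i)
    (k : ι) :
    ∏ i, ∏ j ∈ Ioi i, f i j =
      (∏ i ∈ univ.erase k, ∏ j ∈ (Ioi i).erase k, f i j) * ∏ i ∈ univ.erase k, f i k := by
  have hrow : ∀ i, ∏ j ∈ Ioi i, f i j =
      (∏ j ∈ (Ioi i).erase k, f i j) * if i < k then f i k else 1 := by
    intro i
    split_ifs with h
    · exact (prod_erase_mul _ _ (mem_Ioi.2 h)).symm
    · rw [erase_eq_of_notMem (by simpa using h), mul_one]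
  have hcol : ∏ i ∈ univ.erase k, f i k =
      (∏ j ∈ Ioi k, f k j) * ∏ i, if i < k then f i k else 1 := by
    rw [← prod_filter, ← prod_filter_mul_prod_filter_not (univ.erase k) (· < k), mul_comm]
    congr 1
    · exact prod_congr (by ext; grind) fun j _ => hf j k
    · congr 1
      ext; simpa using ne_of_lt
  rw [prod_congr rfl fun i _ => hrow i, prod_mul_distrib, ← mul_prod_erase univ _ (mem_univ k),
    erase_eq_of_notMem (by simp), hcol]
  ac_rfl

section ResidueSum

variable {F : Type*} [Field F]

theorem sum_eval_div_prod_erase_sub_eq_zero [DecidableEq F] {s : Finset F} {Q : F[X]}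
    (hQ : Q.natDegree + 1 < #s) :
    ∑ r ∈ s, Q.eval r / ∏ r' ∈ s.erase r, (r - r') = 0 := by
  have hdeg : Q.degree < #s :=
    degree_le_natDegree.trans_lt (by exact_mod_cast (by omega : Q.natDegree < #s))
  have h := Lagrange.coeff_eq_sum (v := id) (Set.injOn_id _) hdeg
  simp only [id] at h
  rw [← h]
  exact coeff_eq_zero_of_natDegree_lt (by omega)

theorem eval_div_add_eval_div_add_sum_eval_div_eq_zero {ι : Type*} [Fintype ι] [DecidableEq ι]
    {a b : F} (hab : a ≠ b) {z : ι → F} (hz : Function.Injective z) (ha : ∀ i, z i ≠ a)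
    (hb : ∀ i, z i ≠ b) {Q : F[X]} (hQ : Q.natDegree ≤ Fintype.card ι) :
    Q.eval a / ((a - b) * ∏ i, (a - z i)) + Q.eval b / ((b - a) * ∏ i, (b - z i)) +
      ∑ k, Q.eval (z k) / ((z k - a) * (z k - b) * ∏ i ∈ univ.erase k, (z k - z i)) = 0 := by
  classical
  set T := univ.image z
  have hzT : ∀ c, (∀ i, z i ≠ c) → ∀ S : Finset ι, c ∉ S.image z := fun c hc S => by
    simpa using fun i _ => hc i
  have haT : a ∉ insert b T := by rw [mem_insert, not_or]; exact ⟨hab, hzT a ha univ⟩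
  have hcard : #(insert a (insert b T)) = Fintype.card ι + 2 := by
    rw [card_insert_of_notMem haT, card_insert_of_notMem (hzT b hb univ),
      card_image_of_injective _ hz, card_univ]
  have := sum_eval_div_prod_erase_sub_eq_zero (Q := Q) (s := insert a (insert b T)) (by omega)
  rw [sum_insert haT, sum_insert (hzT b hb univ), sum_image fun i _ j _ h => hz h,
    erase_insert haT, erase_insert_of_ne hab, erase_insert (hzT b hb univ),
    prod_insert (hzT b hb univ), prod_insert (hzT a ha univ), prod_image fun i _ j _ h => hz h,
    prod_image fun i _ j _ h => hz h, ← add_assoc] at this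
  rw [← this]
  congr 1
  refine sum_congr rfl fun k _ => ?_
  rw [erase_insert_of_ne (ha k).symm, erase_insert_of_ne (hb k).symm, ← image_erase hz,
    prod_insert (by rw [mem_insert, not_or]; exact ⟨hab, hzT a ha _⟩), prod_insert (hzT b hb _),
    prod_image fun i _ j _ h => hz h, mul_assoc]

end ResidueSum

section Identity

variable {ι K : Type*} [LinearOrder ι] [Fintype ι] [LocallyFiniteOrderTop ι] [Field K]
  {x : ι → K}

/-- `-(x k * (1 + x k))` is the pole `z k`. -/
theorem prod_prod_Ioi_mul_residue_eq (hx : Function.Injective x)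
    (h2 : ∀ i j, i ≠ j → 1 + x i + x j ≠ 0) {k : ι} (h0 : x k ≠ 0) (h1 : 1 + x k ≠ 0)
    (h3 : 1 + x k + x k ^ 2 ≠ 0) :
    (∏ i, ∏ j ∈ Ioi i, (1 + x i + x j)) *
      ((∏ i, x i * (1 + x i + x i ^ 2 * -(x k * (1 + x k)))) /
        ((-(x k * (1 + x k)) - 1) * -(x k * (1 + x k)) *
          ∏ i ∈ univ.erase k, (-(x k * (1 + x k)) - -(x i * (1 + x i))))) =
      (1 - x k) *
        (∏ i ∈ univ.erase k,
          (1 + x i + x i * x k) * (1 - x i * x k) * x i * (x i - x k)⁻¹) *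
        ∏ i ∈ univ.erase k, ∏ j ∈ (Ioi i).erase k, (1 + x i + x j) := by
  have hfactor : ∀ i ∈ univ.erase k,
      (1 + x i + x k) * (x i * (1 + x i + x i ^ 2 * -(x k * (1 + x k)))) /
        (-(x k * (1 + x k)) - -(x i * (1 + x i))) =
      (1 + x i + x i * x k) * (1 - x i * x k) * x i * (x i - x k)⁻¹ := by
    intro i hi
    have hsub : x i - x k ≠ 0 := sub_ne_zero.2 (hx.ne (ne_of_mem_erase hi))
    have hpair := h2 i k (ne_of_mem_erase hi)
    rw [show -(x k * (1 + x k)) - -(x i * (1 + x i)) = (x i - x k) * (1 + x i + x k) by ring]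
    field_simp
    ring
  have hdiag : x k * (1 + x k + x k ^ 2 * -(x k * (1 + x k))) /
      ((-(x k * (1 + x k)) - 1) * -(x k * (1 + x k))) = 1 - x k := by
    rw [show (-(x k * (1 + x k)) - 1) * -(x k * (1 + x k)) =
      (1 + x k + x k ^ 2) * (x k * (1 + x k)) by ring]
    field_simp
    ring
  rw [← prod_congr rfl hfactor, ← hdiag,
    prod_prod_Ioi_eq_prod_prod_erase_mul (fun i j => by ring) k,
    ← mul_prod_erase univ _ (mem_univ k)]
  simp only [div_eq_mul_inv, mul_inv, prod_mul_distrib, prod_inv_distrib]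
  ring

theorem prod_mul_one_sub_prod_eq_sum (hx : Function.Injective x) (h0 : ∀ i, x i ≠ 0)
    (h1 : ∀ i, 1 + x i ≠ 0) (h2 : ∀ i j, i ≠ j → 1 + x i + x j ≠ 0)
    (h3 : ∀ i, 1 + x i + x i ^ 2 ≠ 0) :
    (∏ i, ∏ j ∈ Ioi i, (1 + x i + x j)) * (1 - ∏ i, x i) =
      ∑ k, (1 - x k) *
        (∏ i ∈ univ.erase k,
          (1 + x i + x i * x k) * (1 - x i * x k) * x i * (x i - x k)⁻¹) *
        ∏ i ∈ univ.erase k, ∏ j ∈ (Ioi i).erase k, (1 + x i + x j) := by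
  set z : ι → K := fun i => -(x i * (1 + x i))
  have hz : Function.Injective z := fun i j hij => by
    by_contra hne
    have : (x i - x j) * (1 + x i + x j) = 0 := by linear_combination -hij
    exact mul_ne_zero (sub_ne_zero.2 (hx.ne hne)) (h2 i j hne) this
  have hz1 : ∀ i, z i ≠ 1 := fun i h => h3 i (by linear_combination -h)
  have hz0 : ∀ i, z i ≠ 0 := fun i => neg_ne_zero.2 (mul_ne_zero (h0 i) (h1 i))
  set Q : K[X] := ∏ i, C (x i) * (C (1 + x i) + C (x i ^ 2) * X)
  have hQ : Q.natDegree ≤ Fintype.card ι :=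
    (natDegree_prod_le _ _).trans <| (sum_le_sum fun i _ => by compute_degree).trans (by simp)
  have hQeval : ∀ w, Q.eval w = ∏ i, x i * (1 + x i + x i ^ 2 * w) := fun w => by
    simp [Q, eval_prod]
  have hres := eval_div_add_eval_div_add_sum_eval_div_eq_zero one_ne_zero hz hz1 hz0 hQ
  simp only [sub_zero, one_mul] at hres
  have hnode1 : Q.eval 1 / ∏ i, (1 - z i) = ∏ i, x i := by
    rw [hQeval, ← prod_div_distrib]
    refine prod_congr rfl fun i _ => ?_
    rw [show 1 - z i = 1 + x i + x i ^ 2 * 1 by ring, mul_div_assoc,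
      div_self (by simpa using h3 i), mul_one]
  have hnode0 : Q.eval 0 / ((0 - 1) * ∏ i, (0 - z i)) = -1 := by
    rw [hQeval]
    simp only [mul_zero, add_zero, zero_sub, z, neg_neg]
    rw [neg_one_mul, div_neg, div_self (prod_ne_zero_iff.2 fun i _ => mul_ne_zero (h0 i) (h1 i))]
  have hsum : ∑ k, Q.eval (z k) / ((z k - 1) * z k * ∏ i ∈ univ.erase k, (z k - z i)) =
      1 - ∏ i, x i := by
    linear_combination hres - hnode1 - hnode0
  rw [← hsum, mul_sum]
  exact sum_congr rfl fun k _ => by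
    rw [hQeval]; exact prod_prod_Ioi_mul_residue_eq hx h2 (h0 k) (h1 k) (h3 k)

end Identity

/-- `∏_{1≤i<j≤n}(1+X_i+X_j) · (1 - ∏_{i=1}^n X_i)
= Σ_{k=1}^n (1-X_k) · ∏_{i≠k} (1+X_i+X_i X_k)(1-X_i X_k) X_i / (X_i-X_k)
  · ∏_{i<j, i,j≠k}(1+X_i+X_j)`
in the field of rational functions in `X_1, …, X_n` over `ℚ`. -/
theorem stmt1 (n : ℕ)
    (Y : Fin n → FractionRing (MvPolynomial (Fin n) ℚ))
    (hY : ∀ i, Y i = algebraMap (MvPolynomial (Fin n) ℚ)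
      (FractionRing (MvPolynomial (Fin n) ℚ)) (MvPolynomial.X i)) :
    (∏ i : Fin n, ∏ j ∈ Finset.Ioi i, (1 + Y i + Y j)) * (1 - ∏ i : Fin n, Y i)
    = ∑ k : Fin n, (1 - Y k) *
        (∏ i ∈ Finset.univ.erase k,
          (1 + Y i + Y i * Y k) * (1 - Y i * Y k) * Y i * (Y i - Y k)⁻¹) *
        ∏ i ∈ Finset.univ.erase k, ∏ j ∈ (Finset.Ioi i).erase k, (1 + Y i + Y j) := by
  have hinj :=
    IsFractionRing.injective (MvPolynomial (Fin n) ℚ) (FractionRing (MvPolynomial (Fin n) ℚ))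
  have hne (p : MvPolynomial (Fin n) ℚ) (w : Fin n → ℚ) (hp : MvPolynomial.eval w p ≠ 0) :
      algebraMap _ (FractionRing (MvPolynomial (Fin n) ℚ)) p ≠ 0 := fun h =>
    hp (by rw [hinj (h.trans (map_zero _).symm), map_zero])
  obtain rfl : Y = fun i => algebraMap _ _ (MvPolynomial.X i) := funext hY
  refine prod_mul_one_sub_prod_eq_sum (hinj.comp MvPolynomial.X_injective) (fun i => ?_)
    (fun i => ?_) (fun i j _ => ?_) (fun i => ?_)
  · exact hne (MvPolynomial.X i) 1 (by simp)
  · have h := hne (1 + MvPolynomial.X i) 0 (by simp)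
    rwa [map_add, map_one] at h
  · have h := hne (1 + MvPolynomial.X i + MvPolynomial.X j) 0 (by simp)
    rwa [map_add, map_add, map_one] at h
  · have h := hne (1 + MvPolynomial.X i + MvPolynomial.X i ^ 2) 0 (by simp)
    rwa [map_add, map_add, map_one, map_pow] at h
end

section
/- For all variables X_1,...,X_n, the antisymmetrization over X_1,...,X_n of ∏_{i=1}^n X_i^{i-1} (1-∏_{j=i}^n X_j)^{-1} equals ∏_{i=1}^n (1-X_i)^{-1} · ∏_{1≤i<j≤n} (X_j-X_i)/(1-X_i X_j). -/
/-!
Induction on the number of variables. Sorting the permutations by `p = σ 0`, the factor of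
index `0` of every summand is `(1 - x₀ ⋯ xₙ)⁻¹`, and the remaining factors are `∏_{a ≠ p} x_a`
times the summand for the variables other than `x_p`, with the sign `(-1)^p`. By induction the
inner antisymmetrizations are closed forms in `n` variables, and deleting `x_p` from the closed
form in `n + 1` variables costs the factor
`(-1)^(n-p) (1 - x_p) ∏_{a ≠ p} (1 - x_p x_a)/(x_p - x_a)`.
What remains is the partial fraction identity
  `∑_p (1 - x_p)/x_p ∏_{a ≠ p} (1 - x_p x_a)/(x_p - x_a) = (-1)^(n+1) (1 - (x₀ ⋯ xₙ)⁻¹)`,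
which says that the residues of `∏_a (1 - x_a X) / (X (X + 1) ∏_a (X - x_a))` sum to zero.
The argument works at every point of a field avoiding these poles and denominators, such as the
tuple of variables in the field of rational functions.
-/

open Finset Equiv

section Antisymmetrization

variable {α R : Type*} [CommRing R]

def antisymmetrization {n : ℕ} (f : (Fin n → α) → R) (x : Fin n → α) : R :=
  ∑ σ : Perm (Fin n), ((Perm.sign σ : ℤ) : R) * f (fun i => x (σ i))

theorem antisymmetrization_succ {n : ℕ} (f : (Fin (n + 1) → α) → R)
    (x : Fin (n + 1) → α) :
    antisymmetrization f x = ∑ p : Fin (n + 1), (-1) ^ (p : ℕ) *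
      antisymmetrization (fun z => f (Fin.cons (x p) z)) (p.removeNth x) := by
  set φ : Fin (n + 1) × Perm (Fin n) → Perm (Fin (n + 1)) :=
    fun pτ => pτ.1.cycleRange.symm * Perm.decomposeFin.symm (0, pτ.2) with hφ
  have hφ_zero (pτ) : φ pτ 0 = pτ.1 := by simp [hφ]
  have hφ_succ (pτ) (i : Fin n) : φ pτ i.succ = pτ.1.succAbove (pτ.2 i) := by simp [hφ]
  have hφ_inj : Function.Injective φ := by
    rintro ⟨p, τ⟩ ⟨q, υ⟩ h
    obtain rfl : p = q := by simpa only [hφ_zero] using DFunLike.congr_fun h 0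
    refine Prod.ext rfl (Perm.ext fun i => ?_)
    simpa only [hφ_succ, Fin.succAbove_right_inj] using DFunLike.congr_fun h i.succ
  have hφ_bij : Function.Bijective φ := by
    refine (Fintype.bijective_iff_injective_and_card φ).2 ⟨hφ_inj, ?_⟩
    simp [Fintype.card_perm, Nat.factorial_succ]
  rw [antisymmetrization, ← Fintype.sum_bijective φ hφ_bij _ _ (fun _ => rfl),
    Fintype.sum_prod_type]
  refine sum_congr rfl fun p _ => ?_
  rw [antisymmetrization, mul_sum]
  refine sum_congr rfl fun τ _ => ?_
  have hsign :
      ((Perm.sign (φ (p, τ)) : ℤ) : R) = (-1) ^ (p : ℕ) * ((Perm.sign τ : ℤ) : R) := by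
    simp [hφ]
  have hcomp : (fun i => x (φ (p, τ) i)) = Fin.cons (x p) (fun i => p.removeNth x (τ i)) := by
    ext i
    cases i using Fin.cases <;> simp [hφ_zero, hφ_succ, Fin.removeNth]
  rw [hsign, hcomp, mul_assoc]

end Antisymmetrization

theorem Fin.prod_Ioi_succAbove {M : Type*} [CommMonoid M] {n : ℕ} (p : Fin (n + 1))
    (g : Fin (n + 1) → Fin (n + 1) → M) :
    ∏ i, ∏ j ∈ Ioi i, g i j =
      (∏ j ∈ Ioi p, g p j) * (∏ i ∈ Iio p, g i p) *
        ∏ i, ∏ j ∈ Ioi i, g (p.succAbove i) (p.succAbove j) := by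
  simp only [← filter_lt_eq_Ioi, ← filter_gt_eq_Iio, prod_filter]
  rw [Fin.prod_univ_succAbove _ p, Fin.prod_univ_succAbove (fun i => if i < p then _ else 1) p]
  simp only [Fin.prod_univ_succAbove _ p, lt_irrefl, if_false, one_mul, prod_mul_distrib,
    Fin.succAbove_lt_succAbove_iff, mul_assoc]

theorem Finset.prod_univ_erase_eq_prod_Ioi_mul_prod_Iio {ι M : Type*} [CommMonoid M]
    [Fintype ι] [LinearOrder ι] [LocallyFiniteOrderTop ι] [LocallyFiniteOrderBot ι]
    (p : ι) (f : ι → M) :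
    ∏ a ∈ univ.erase p, f a = (∏ a ∈ Ioi p, f a) * ∏ a ∈ Iio p, f a := by
  rw [← prod_union (disjoint_left.2 fun a ha hb => lt_asymm (mem_Ioi.1 ha) (mem_Iio.1 hb))]
  congr 1
  ext a
  simp only [mem_erase, mem_univ, and_true, mem_union, mem_Ioi, mem_Iio]
  exact ne_iff_lt_or_gt.trans or_comm

variable {F : Type*} [Field F]

section Polynomial

open Polynomial

theorem Lagrange.sum_eval_mul_nodalWeight {ι : Type*} [DecidableEq ι] {s : Finset ι}
    {v : ι → F} (hvs : Set.InjOn v s) {g : F[X]} (hg : g.degree < #s) :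
    ∑ i ∈ s, g.eval (v i) * nodalWeight s v i = g.coeff (#s - 1) := by
  conv_rhs => rw [eq_interpolate hvs hg]
  rw [interpolate_apply, finsetSum_coeff]
  refine sum_congr rfl fun i hi => ?_
  have hmonic : (nodal (s.erase i) v).Monic := nodal_monic
  have hdeg : (nodal (s.erase i) v).natDegree = #s - 1 := by
    rw [natDegree_nodal, card_erase_of_mem hi]
  rw [basis_eq_prod_sub_inv_mul_nodal_div hi, ← nodal_erase_eq_nodal_div hi, ← mul_assoc,
    ← C_mul, coeff_C_mul, ← hdeg, hmonic.coeff_natDegree, mul_one, mul_comm]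

theorem Lagrange.sum_eval_mul_nodalWeight_eq_zero {ι : Type*} [DecidableEq ι] {s : Finset ι}
    {v : ι → F} (hvs : Set.InjOn v s) {g : F[X]} (hg : g.natDegree + 1 < #s) :
    ∑ i ∈ s, g.eval (v i) * nodalWeight s v i = 0 := by
  have hdeg : g.degree < #s :=
    degree_le_natDegree.trans_lt (by exact_mod_cast (Nat.lt_succ_self _).trans hg)
  rw [sum_eval_mul_nodalWeight hvs hdeg, coeff_eq_zero_of_natDegree_lt (by omega)]

theorem natDegree_prod_one_sub_C_mul_X_le {R : Type*} [CommRing R] (s : Finset R) :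
    (∏ a ∈ s, (1 - C a * X)).natDegree ≤ #s := by
  refine (natDegree_prod_le _ _).trans ((sum_le_card_nsmul _ _ 1 fun a _ => ?_).trans (by simp))
  compute_degree

/-- The residues of `∏ a ∈ s, (1 - a X) / (X (X + 1) ∏ a ∈ s, (X - a))` at `0`, `-1` and the
points of `s` sum to zero, the numerator having degree at most `#s`. -/
theorem Finset.sum_one_sub_div_mul_prod_div_sub [DecidableEq F] {s : Finset F} (h0 : 0 ∉ s)
    (h1 : -1 ∉ s) :
    ∑ y ∈ s, (1 - y) / y * ∏ a ∈ s.erase y, (1 - y * a) / (y - a) =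
      (-1) ^ #s * (1 - (∏ a ∈ s, a)⁻¹) := by
  set g : F[X] := ∏ a ∈ s, (1 - C a * X) with hg
  have h0' : (0 : F) ∉ insert (-1) s := by simp [h0]
  set t := insert 0 (insert (-1) s) with ht
  have hres := Lagrange.sum_eval_mul_nodalWeight_eq_zero (Set.injOn_id (t : Set F)) (g := g) <| by
    rw [card_insert_of_notMem h0', card_insert_of_notMem h1]
    linarith [natDegree_prod_one_sub_C_mul_X_le s]
  rw [sum_insert h0', sum_insert h1] at hres
  have hw0 : g.eval 0 * Lagrange.nodalWeight t id 0 = (-1) ^ #s * (∏ a ∈ s, a)⁻¹ := by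
    have hg0 : g.eval 0 = 1 := by simp [hg, eval_prod]
    rw [hg0, one_mul, Lagrange.nodalWeight, ht, erase_insert h0', prod_insert h1,
      ← prod_inv_distrib, ← prod_neg]
    simp
  have hw1 : g.eval (-1) * Lagrange.nodalWeight t id (-1) = -(-1) ^ #s := by
    have hne : ∏ a ∈ s, (1 + a) ≠ 0 := prod_ne_zero_iff.2 fun a ha h => h1 (by
      rwa [← eq_neg_of_add_eq_zero_right h])
    have hinv : ∏ a ∈ s, (-1 - a)⁻¹ = (-1) ^ #s * (∏ a ∈ s, (1 + a))⁻¹ := by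
      rw [← prod_inv_distrib, ← prod_neg]
      exact prod_congr rfl fun a _ => by rw [← inv_neg]; ring_nf
    rw [Lagrange.nodalWeight, ht, erase_insert_of_ne (neg_ne_zero.2 one_ne_zero).symm,
      erase_insert h1, prod_insert h0]
    simp only [hg, eval_prod, eval_sub, eval_one, eval_mul, eval_C, eval_X, id_eq, mul_neg_one,
      sub_neg_eq_add, sub_zero, hinv]
    field_simp
  have hwy : ∀ y ∈ s, g.eval y * Lagrange.nodalWeight t id y =
      (1 - y) / y * ∏ a ∈ s.erase y, (1 - y * a) / (y - a) := by
    intro y hy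
    have hy0 : y ≠ 0 := fun h => h0 (h ▸ hy)
    have hy1 : y + 1 ≠ 0 := fun h => h1 (eq_neg_of_add_eq_zero_left h ▸ hy)
    rw [Lagrange.nodalWeight, ht, erase_insert_of_ne (ne_of_mem_of_not_mem hy h0).symm,
      erase_insert_of_ne (ne_of_mem_of_not_mem hy h1).symm, prod_insert (by simp [h0]),
      prod_insert fun h => h1 (mem_of_mem_erase h), hg, eval_prod, ← mul_prod_erase s _ hy,
      prod_div_distrib, prod_inv_distrib]
    simp only [eval_sub, eval_one, eval_mul, eval_C, eval_X, id_eq, sub_zero, sub_neg_eq_add]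
    rw [show 1 - y * y = (1 - y) * (y + 1) by ring,
      prod_congr rfl fun a _ => by rw [mul_comm a y]]
    field_simp
  simp only [id_eq] at hres
  rw [hw0, hw1, sum_congr rfl hwy] at hres
  linear_combination hres

end Polynomial

theorem Fintype.sum_one_sub_div_mul_prod_div_sub {ι : Type*} [Fintype ι] [DecidableEq ι]
    {x : ι → F} (hx : Function.Injective x) (h0 : ∀ i, x i ≠ 0) (h1 : ∀ i, x i ≠ -1) :
    ∑ p, (1 - x p) / x p * ∏ a ∈ univ.erase p, (1 - x p * x a) / (x p - x a) =
      (-1) ^ Fintype.card ι * (1 - (∏ a, x a)⁻¹) := by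
  classical
  have h := Finset.sum_one_sub_div_mul_prod_div_sub (s := univ.image x)
    (by simpa using h0) (by simpa using h1)
  rw [sum_image hx.injOn, prod_image hx.injOn, card_image_of_injective _ hx, card_univ] at h
  rw [← h]
  refine Finset.sum_congr rfl fun p _ => ?_
  rw [← image_erase hx, prod_image hx.injOn]

def stairTerm {n : ℕ} (x : Fin n → F) : F :=
  ∏ i, x i ^ (i : ℕ) * (1 - ∏ j ∈ Ici i, x j)⁻¹

theorem stairTerm_cons {n : ℕ} (y : F) (z : Fin n → F) :
    stairTerm (Fin.cons y z : Fin (n + 1) → F) =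
      (1 - y * ∏ i, z i)⁻¹ * ((∏ i, z i) * stairTerm z) := by
  have hIci (i : Fin n) :
      ∏ j ∈ Ici i.succ, (Fin.cons y z : Fin (n + 1) → F) j = ∏ j ∈ Ici i, z j := by
    rw [← Fin.map_succEmb_Ici, prod_map]
    rfl
  rw [stairTerm, Fin.prod_univ_succ, stairTerm, ← prod_mul_distrib, Ici_zero_eq_univ]
  simp only [hIci, Fin.cons_succ, Fin.val_succ, pow_succ', mul_assoc, Fin.prod_cons,
    Fin.cons_zero, Fin.val_zero, pow_zero, one_mul]

theorem antisymmetrization_stairTerm_succ {n : ℕ} (x : Fin (n + 1) → F) :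
    antisymmetrization stairTerm x = (1 - ∏ i, x i)⁻¹ * ∑ p : Fin (n + 1), (-1) ^ (p : ℕ) *
      ((∏ i, p.removeNth x i) * antisymmetrization stairTerm (p.removeNth x)) := by
  rw [antisymmetrization_succ, mul_sum]
  refine sum_congr rfl fun p _ => ?_
  simp only [antisymmetrization, stairTerm_cons, mul_sum]
  refine sum_congr rfl fun τ _ => ?_
  rw [Equiv.prod_comp τ (p.removeNth x), ← Fin.mul_prod_removeNth p x]
  ring

def pairProd {n : ℕ} (x : Fin n → F) : F :=
  ∏ i, ∏ j ∈ Ioi i, (x j - x i) * (1 - x i * x j)⁻¹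

theorem pairProd_eq_mul_pairProd_removeNth {n : ℕ} (x : Fin (n + 1) → F) (p : Fin (n + 1)) :
    pairProd x = (-1) ^ (n - p : ℕ) *
      (∏ a ∈ univ.erase p, (x p - x a) * (1 - x p * x a)⁻¹) * pairProd (p.removeNth x) := by
  have hIoi : ∏ j ∈ Ioi p, (x j - x p) * (1 - x p * x j)⁻¹ =
      (-1) ^ (n - p : ℕ) * ∏ j ∈ Ioi p, (x p - x j) * (1 - x p * x j)⁻¹ := by
    rw [show n - (p : ℕ) = #(Ioi p) by simp, ← prod_neg]
    exact prod_congr rfl fun j _ => by ring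
  have hIio : ∏ i ∈ Iio p, (x p - x i) * (1 - x i * x p)⁻¹ =
      ∏ i ∈ Iio p, (x p - x i) * (1 - x p * x i)⁻¹ :=
    prod_congr rfl fun i _ => by rw [mul_comm (x i)]
  change _ = _ * pairProd (fun i => x (p.succAbove i))
  rw [pairProd, pairProd, Fin.prod_Ioi_succAbove p, hIoi, hIio,
    prod_univ_erase_eq_prod_Ioi_mul_prod_Iio]
  ring

/-- `x i ≠ 0` and `x i ≠ -1` keep the points `x i` apart from the poles `0` and `-1` in
`Finset.sum_one_sub_div_mul_prod_div_sub`. -/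
structure IsGeneric {n : ℕ} (x : Fin n → F) : Prop where
  injective : Function.Injective x
  ne_zero : ∀ i, x i ≠ 0
  ne_neg_one : ∀ i, x i ≠ -1
  prod_ne_one : ∀ S : Finset (Fin n), S.Nonempty → ∏ i ∈ S, x i ≠ 1

namespace IsGeneric

variable {n : ℕ} {x : Fin n → F}

theorem removeNth {x : Fin (n + 1) → F} (hx : IsGeneric x) (p : Fin (n + 1)) :
    IsGeneric (p.removeNth x) where
  injective := hx.injective.comp Fin.succAbove_right_injective
  ne_zero _ := hx.ne_zero _
  ne_neg_one _ := hx.ne_neg_one _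
  prod_ne_one S hS := by
    simpa [prod_map, Fin.removeNth_apply] using
      hx.prod_ne_one (S.map (Fin.succAboveEmb p)) hS.map

theorem one_sub_ne_zero (hx : IsGeneric x) (i : Fin n) : 1 - x i ≠ 0 :=
  sub_ne_zero.2 fun h => hx.prod_ne_one {i} (singleton_nonempty i) (by simp [← h])

theorem one_sub_prod_ne_zero (hx : IsGeneric x) [NeZero n] : 1 - ∏ i, x i ≠ 0 :=
  sub_ne_zero.2 fun h => hx.prod_ne_one univ univ_nonempty h.symm

theorem one_sub_mul_ne_zero (hx : IsGeneric x) {i j : Fin n} (hij : i ≠ j) :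
    1 - x i * x j ≠ 0 :=
  sub_ne_zero.2 fun h => hx.prod_ne_one {i, j} (insert_nonempty i {j}) (by simp [hij, ← h])

theorem prod_erase_ne_zero (hx : IsGeneric x) (p : Fin n) :
    ∏ a ∈ univ.erase p, (x p - x a) * (1 - x p * x a)⁻¹ ≠ 0 :=
  prod_ne_zero_iff.2 fun _ ha => mul_ne_zero
    (sub_ne_zero.2 fun h => (ne_of_mem_erase ha) (hx.injective h).symm)
    (inv_ne_zero (hx.one_sub_mul_ne_zero (ne_of_mem_erase ha).symm))

end IsGeneric

def closedForm {n : ℕ} (x : Fin n → F) : F :=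
  (∏ i, (1 - x i)⁻¹) * pairProd x

theorem IsGeneric.closedForm_removeNth {n : ℕ} {x : Fin (n + 1) → F} (hx : IsGeneric x)
    (p : Fin (n + 1)) :
    closedForm (p.removeNth x) = (-1) ^ (n - p : ℕ) * (1 - x p) * closedForm x *
      ∏ a ∈ univ.erase p, (1 - x p * x a) / (x p - x a) := by
  have hE := hx.prod_erase_ne_zero p
  have h1xp := hx.one_sub_ne_zero p
  have hinv : ∏ a ∈ univ.erase p, (1 - x p * x a) / (x p - x a) =
      (∏ a ∈ univ.erase p, (x p - x a) * (1 - x p * x a)⁻¹)⁻¹ := by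
    rw [← prod_inv_distrib]
    exact prod_congr rfl fun a _ => by rw [mul_inv, inv_inv, div_eq_mul_inv, mul_comm]
  have hsq : ((-1 : F) ^ (n - p : ℕ)) ^ 2 = 1 := by rw [← pow_mul, pow_mul']; simp
  rw [closedForm, closedForm, pairProd_eq_mul_pairProd_removeNth x p, hinv,
    ← Fin.mul_prod_removeNth p (fun i => (1 - x i)⁻¹)]
  simp only [Fin.removeNth_apply]
  set E := ∏ a ∈ univ.erase p, (x p - x a) * (1 - x p * x a)⁻¹
  field_simp
  rw [hsq, mul_one]

theorem antisymmetrization_stairTerm {n : ℕ} {x : Fin n → F} (hx : IsGeneric x) :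
    antisymmetrization stairTerm x = closedForm x := by
  induction n with
  | zero => simp [antisymmetrization, stairTerm, closedForm, pairProd]
  | succ n ih =>
    have hsummand (p : Fin (n + 1)) :
        (-1) ^ (p : ℕ) *
            ((∏ i, p.removeNth x i) * antisymmetrization stairTerm (p.removeNth x)) =
          (-1) ^ n * (∏ i, x i) * closedForm x *
            ((1 - x p) / x p * ∏ a ∈ univ.erase p, (1 - x p * x a) / (x p - x a)) := by
      have hsign : (-1 : F) ^ (p : ℕ) * (-1) ^ (n - p : ℕ) = (-1) ^ n := by
        rw [← pow_add, Nat.add_sub_cancel' (Fin.is_le p)]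
      have hxp := hx.ne_zero p
      rw [ih (hx.removeNth p), hx.closedForm_removeNth p, ← Fin.mul_prod_removeNth p x, ← hsign]
      field_simp
    have hsign : (-1 : F) ^ n * (-1) ^ (n + 1) = -1 := by
      rw [← pow_add, Odd.neg_one_pow ⟨n, by ring⟩]
    have hP : ∏ i, x i ≠ 0 := prod_ne_zero_iff.2 fun i _ => hx.ne_zero i
    have h1P := hx.one_sub_prod_ne_zero
    rw [antisymmetrization_stairTerm_succ, sum_congr rfl fun p _ => hsummand p, ← mul_sum,
      Fintype.sum_one_sub_div_mul_prod_div_sub hx.injective hx.ne_zero hx.ne_neg_one,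
      Fintype.card_fin]
    calc _ = (1 - ∏ i, x i)⁻¹ * ((-1) ^ n * (-1) ^ (n + 1)) *
          ((∏ i, x i) * (1 - (∏ i, x i)⁻¹)) * closedForm x := by ring
      _ = _ := by
        rw [hsign]
        field_simp
        ring

theorem isGeneric_X {R K : Type*} [CommRing R] [Nontrivial R] [Field K] {n : ℕ}
    (f : MvPolynomial (Fin n) R →+* K) (hf : Function.Injective f) :
    IsGeneric fun i => f (MvPolynomial.X i) where
  injective := hf.comp MvPolynomial.X_injective
  ne_zero i := (map_ne_zero_iff f hf).2 (MvPolynomial.X_ne_zero i)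
  ne_neg_one i h := by
    rw [← map_one f, ← map_neg] at h
    simpa using congrArg MvPolynomial.constantCoeff (hf h)
  prod_ne_one S hS h := by
    rw [← map_prod, ← map_one f] at h
    obtain ⟨i, hi⟩ := hS
    simpa [prod_eq_zero hi] using congrArg MvPolynomial.constantCoeff (hf h)

/-- The antisymmetrization over `X_1, …, X_n` of
`∏_{i=1}^n X_i^{i-1} (1-∏_{j=i}^n X_j)⁻¹` equals
`∏_{i=1}^n (1-X_i)⁻¹ · ∏_{1≤i<j≤n} (X_j-X_i)/(1-X_i X_j)`,
in the field of rational functions in `X_1, …, X_n` over `ℚ`. -/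
theorem stmt2 (n : ℕ)
    (Y : Fin n → FractionRing (MvPolynomial (Fin n) ℚ))
    (hY : ∀ i, Y i = algebraMap (MvPolynomial (Fin n) ℚ)
      (FractionRing (MvPolynomial (Fin n) ℚ)) (MvPolynomial.X i)) :
    (∑ σ : Equiv.Perm (Fin n),
      ((Equiv.Perm.sign σ : ℤ) : FractionRing (MvPolynomial (Fin n) ℚ)) *
        ∏ i : Fin n, (Y (σ i)) ^ (i : ℕ) * (1 - ∏ j ∈ Finset.Ici i, Y (σ j))⁻¹)
    = (∏ i : Fin n, (1 - Y i)⁻¹) *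
        ∏ i : Fin n, ∏ j ∈ Finset.Ioi i, (Y j - Y i) * (1 - Y i * Y j)⁻¹ := by
  obtain rfl : Y = fun i => algebraMap _ _ (MvPolynomial.X i) := funext hY
  simpa only [antisymmetrization, stairTerm, closedForm, pairProd] using
    antisymmetrization_stairTerm (isGeneric_X _ (IsFractionRing.injective _ _))
end

section
/- Let T be an alternating sign triangle of order n and let j_1 < ... < j_{n-1} be the positions of its 1-columns other than the central column, indexed from 0 to 2n−3 from the left (skipping the central column). Then for every i ∈ {1,...,n−1}, the interval [n−1−i, n−2+i] contains at least i of the values j_1,...,j_{n-1}. -/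
open Finset

/-! Each column of an AST has partial sums (from the top) in `{0, 1}`: its nonzero entries
alternate starting with `1`. Hence the sum of any bottom block of a column is at most the
column sum, which is `0` or `1`. The bottom `i + 1` rows lie inside the columns `[n - i, n + i]`
and have total sum `i + 1`, so this window contains at least `i + 1` one-columns, at least `i`
of them off-centre; their positions lie in `[n - 1 - i, n - 2 + i]`. -/

/-- An alternating sign triangle (AST) of order `n`: rows `i = 1,…,n`, row `i`
occupying columns `j = i,…,2n−i` (entries outside this region are `0`), entries in
`{−1,0,1}`, nonzero entries alternating in sign along each row and each column,
all row sums equal to `1`, and the topmost nonzero entry of each column equal to `1`. -/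
structure AST (n : ℕ) where
  a : ℕ → ℕ → ℤ
  zero_outside : ∀ i j, ¬(1 ≤ i ∧ i ≤ n ∧ i ≤ j ∧ j ≤ 2 * n - i) → a i j = 0
  entries : ∀ i j, a i j = -1 ∨ a i j = 0 ∨ a i j = 1
  rowsum : ∀ i, 1 ≤ i → i ≤ n → (∑ j ∈ Finset.Icc i (2 * n - i), a i j) = 1
  rowalt : ∀ i j₁ j₂, j₁ < j₂ → a i j₁ ≠ 0 → a i j₂ ≠ 0 →
    (∀ j, j₁ < j → j < j₂ → a i j = 0) → a i j₁ = -a i j₂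
  colalt : ∀ j i₁ i₂, i₁ < i₂ → a i₁ j ≠ 0 → a i₂ j ≠ 0 →
    (∀ i, i₁ < i → i < i₂ → a i j = 0) → a i₁ j = -a i₂ j
  coltop : ∀ j i, a i j ≠ 0 → (∀ i', i' < i → a i' j = 0) → a i j = 1

/-- The sum of the entries of column `j` of an AST. -/
def colsum (n : ℕ) (T : AST n) (j : ℕ) : ℤ := ∑ i ∈ Finset.Icc 1 n, T.a i j

/-- The set of positions (indexed `0,…,2n−3` from the left, skipping the central
column `n`) of the `1`-columns of `T` other than the central column. -/
def onePositions (n : ℕ) (T : AST n) : Finset ℕ :=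
  ((Finset.Icc 1 (2 * n - 1)).filter (fun j => j ≠ n ∧ colsum n T j = 1)).image
    (fun j => if j < n then j - 1 else j - 2)

namespace AST

variable {n : ℕ} (T : AST n)

def partialColsum (j m : ℕ) : ℤ := ∑ i ∈ Icc 1 m, T.a i j

lemma partialColsum_succ (j m : ℕ) :
    T.partialColsum j (m + 1) = T.partialColsum j m + T.a (m + 1) j :=
  sum_Icc_succ_top (by omega) _

lemma partialColsum_self (j : ℕ) : T.partialColsum j n = colsum n T j := rfl

lemma partialColsum_cases (j m : ℕ) :
    ((∀ i ≤ m, T.a i j = 0) ∧ T.partialColsum j m = 0) ∨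
    ∃ i₀ ≤ m, T.a i₀ j ≠ 0 ∧ (∀ k, i₀ < k → k ≤ m → T.a k j = 0) ∧
      2 * T.partialColsum j m = T.a i₀ j + 1 := by
  induction m with
  | zero => exact .inl ⟨fun i hi => T.zero_outside i j (by omega), by simp [partialColsum]⟩
  | succ m ih =>
    rw [partialColsum_succ]
    by_cases hz : T.a (m + 1) j = 0
    · rw [hz, add_zero]
      rcases ih with ⟨hzero, hsum⟩ | ⟨i₀, hi₀m, hi₀, hlast, hsum⟩
      · exact .inl ⟨fun i hi => (Nat.lt_or_eq_of_le hi).elim (fun h => hzero i (by omega))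
          (by rintro rfl; exact hz), hsum⟩
      · exact .inr ⟨i₀, by omega, hi₀, fun k hk hkm => (Nat.lt_or_eq_of_le hkm).elim
          (fun h => hlast k hk (by omega)) (by rintro rfl; exact hz), hsum⟩
    · refine .inr ⟨m + 1, le_rfl, hz, fun k hk hkm => by omega, ?_⟩
      rcases ih with ⟨hzero, hsum⟩ | ⟨i₀, hi₀m, hi₀, hlast, hsum⟩
      · have htop : T.a (m + 1) j = 1 := T.coltop j _ hz fun i hi => hzero i (by omega)
        rw [hsum, htop]; rfl
      · have halt : T.a i₀ j = -T.a (m + 1) j :=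
          T.colalt j i₀ (m + 1) (by omega) hi₀ hz
            fun k hk hkm => hlast k hk (by omega)
        linarith

lemma partialColsum_nonneg_and_le_one (j m : ℕ) :
    0 ≤ T.partialColsum j m ∧ T.partialColsum j m ≤ 1 := by
  rcases T.partialColsum_cases j m with ⟨-, hsum⟩ | ⟨i₀, -, hi₀, -, hsum⟩
  · omega
  · rcases T.entries i₀ j with h | h | h <;> simp only [h] at hsum hi₀ <;> omega

lemma sum_Icc_le_colsum (j r : ℕ) (hr : 1 ≤ r) :
    ∑ i ∈ Icc r n, T.a i j ≤ colsum n T j := by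
  obtain ⟨s, rfl⟩ : ∃ s, r = s + 1 := ⟨r - 1, by omega⟩
  rcases le_or_gt s n with hs | hs
  · have hsplit := sum_Ioc_consecutive (T.a · j) (Nat.zero_le s) hs
    have hprefix := (T.partialColsum_nonneg_and_le_one j s).1
    rw [partialColsum, ← zero_add 1, Icc_add_one_left_eq_Ioc] at hprefix
    rw [colsum, Icc_add_one_left_eq_Ioc, ← zero_add 1, Icc_add_one_left_eq_Ioc, ← hsplit]
    linarith
  · rw [Icc_eq_empty (by omega), sum_empty, ← partialColsum_self]
    exact (T.partialColsum_nonneg_and_le_one j n).1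

lemma sum_row_eq_one_of_le {r i : ℕ} (hri : r ≤ i) (hr : 1 ≤ r) (hin : i ≤ n) :
    ∑ j ∈ Icc r (2 * n - r), T.a i j = 1 := by
  rw [← T.rowsum i (by omega) hin]
  refine (sum_subset (Icc_subset_Icc hri (by omega)) fun j _ hj => ?_).symm
  exact T.zero_outside i j fun h => hj (mem_Icc.2 ⟨h.2.2.1, h.2.2.2⟩)

theorem le_card_oneColumns_window {r : ℕ} (hr : 1 ≤ r) :
    n + 1 - r ≤ #{j ∈ Icc r (2 * n - r) | colsum n T j = 1} := by
  have hbound : ∀ j, colsum n T j ≤ if colsum n T j = 1 then 1 else 0 := fun j => by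
    have := T.partialColsum_nonneg_and_le_one j n
    rw [partialColsum_self] at this
    split_ifs <;> omega
  have : ((n + 1 - r : ℕ) : ℤ) ≤ #{j ∈ Icc r (2 * n - r) | colsum n T j = 1} :=
    calc ((n + 1 - r : ℕ) : ℤ)
        = ∑ i ∈ Icc r n, ∑ j ∈ Icc r (2 * n - r), T.a i j := by
          rw [sum_congr rfl fun i hi => T.sum_row_eq_one_of_le (mem_Icc.1 hi).1 hr
            (mem_Icc.1 hi).2]
          simp
      _ = ∑ j ∈ Icc r (2 * n - r), ∑ i ∈ Icc r n, T.a i j := sum_comm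
      _ ≤ ∑ j ∈ Icc r (2 * n - r), colsum n T j :=
          sum_le_sum fun j _ => T.sum_Icc_le_colsum j r hr
      _ ≤ ∑ j ∈ Icc r (2 * n - r), if colsum n T j = 1 then 1 else 0 :=
          sum_le_sum fun j _ => hbound j
      _ = _ := sum_boole _ _
  exact_mod_cast this

lemma card_erase_center_le_card_onePositions {i : ℕ} (hin : i < n) :
    #({j ∈ Icc (n - i) (n + i) | colsum n T j = 1}.erase n) ≤
      #{p ∈ onePositions n T | n - 1 - i ≤ p ∧ p ≤ n - 2 + i} := by
  refine card_le_card_of_injOn (fun j => if j < n then j - 1 else j - 2) (fun j hj => ?_) ?_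
  · simp only [coe_erase, coe_filter, Set.mem_sdiff, Set.mem_ofPred_eq, mem_Icc,
      Set.mem_singleton_iff] at hj
    simp only [coe_filter, Set.mem_ofPred_eq, onePositions, mem_image, mem_filter, mem_Icc]
    refine ⟨⟨j, ⟨⟨by omega, by omega⟩, hj.2, hj.1.2⟩, rfl⟩, ?_⟩
    split_ifs <;> omega
  · intro j₁ hj₁ j₂ hj₂ heq
    simp only [coe_erase, coe_filter, Set.mem_sdiff, Set.mem_ofPred_eq, mem_Icc,
      Set.mem_singleton_iff] at hj₁ hj₂
    dsimp only at heq
    split_ifs at heq <;> omega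

end AST

theorem stmt10_general (n : ℕ) (T : AST n) :
    ∀ i, 1 ≤ i → i ≤ n - 1 →
      i ≤ ((onePositions n T).filter
        (fun p => n - 1 - i ≤ p ∧ p ≤ n - 2 + i)).card := by
  intro i _ hin
  have hwindow := T.le_card_oneColumns_window (r := n - i) (by omega)
  rw [show 2 * n - (n - i) = n + i by omega, show n + 1 - (n - i) = i + 1 by omega] at hwindow
  calc i ≤ #{j ∈ Icc (n - i) (n + i) | colsum n T j = 1} - 1 := by omega
    _ ≤ #({j ∈ Icc (n - i) (n + i) | colsum n T j = 1}.erase n) := pred_card_le_card_erase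
    _ ≤ _ := T.card_erase_center_le_card_onePositions (by omega)

/-- For an AST of order `n` with `1`-column positions
`j_1 < … < j_{n-1}` (central column excluded, positions indexed from `0`), every
interval `[n−1−i, n−2+i]` with `1 ≤ i ≤ n−1` contains at least `i` of these positions. -/
theorem stmt10 (n : ℕ) (hn : 1 ≤ n) (T : AST n) :
    ∀ i, 1 ≤ i → i ≤ n - 1 →
      i ≤ ((onePositions n T).filter
        (fun p => n - 1 - i ≤ p ∧ p ≤ n - 2 + i)).card :=
  stmt10_general n T
end

section
/- In an alternating sign triangle T of order n, for each i ∈ {1,...,n−1}, the triangular subarray T_i consisting of the bottom i+1 rows of T has entry sum i+1, and T_i contains at least i+1 columns whose sum is 1; moreover every column of T_i with sum 1 is also a 1-column of T. -/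
/-!
Every column of an AST is a sequence whose nonzero entries alternate in sign and start with `1`,
so its partial sums from the top are all `0` or `1`. A column sum of `T_i` is a difference of two
such partial sums, hence at most `1`, and it equals `1` exactly when the partial sum above `T_i`
is `0` and the full column sum is `1`. Since the `i + 1` rows of `T_i` each sum to `1`, the column
sums of `T_i` add up to `i + 1`, and being at most `1` at least `i + 1` of them equal `1`.
-/

open Finset

/-- The sum of the entries of column `j` of the subarray `T_i` consisting of the
bottom `i+1` rows (rows `n−i,…,n`) of an AST `T` of order `n`. -/
def colsumBottom (n : ℕ) (T : AST n) (i j : ℕ) : ℤ := ∑ r ∈ Finset.Icc (n - i) n, T.a r j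

theorem Finset.sum_le_card_filter_eq_one {ι : Type*} (s : Finset ι) (g : ι → ℤ)
    (hg : ∀ x ∈ s, g x ≤ 1) : ∑ x ∈ s, g x ≤ #(s.filter (g · = 1)) := by
  rw [natCast_card_filter]
  refine sum_le_sum fun x hx => ?_
  have := hg x hx
  split_ifs <;> omega

structure IsAltSignSeq (f : ℕ → ℤ) : Prop where
  alt : ∀ i₁ i₂, i₁ < i₂ → f i₁ ≠ 0 → f i₂ ≠ 0 →
    (∀ i, i₁ < i → i < i₂ → f i = 0) → f i₁ = -f i₂
  top : ∀ i, f i ≠ 0 → (∀ i', i' < i → f i' = 0) → f i = 1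

namespace IsAltSignSeq

variable {f : ℕ → ℤ}

theorem sum_range_eq_zero_or_one_and_next (hf : IsAltSignSeq f) (k : ℕ) :
    (∑ r ∈ range k, f r = 0 ∨ ∑ r ∈ range k, f r = 1) ∧
    ∀ m, k ≤ m → f m ≠ 0 → (∀ r, k ≤ r → r < m → f r = 0) →
      f m = 1 - 2 * ∑ r ∈ range k, f r := by
  induction k with
  | zero =>
    refine ⟨by simp, fun m _ hm hzero => ?_⟩
    simpa using hf.top m hm fun r hr => hzero r r.zero_le hr
  | succ k ih =>
    obtain ⟨hsum, hnext⟩ := ih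
    rw [sum_range_succ]
    by_cases hk : f k = 0
    · rw [hk, add_zero]
      refine ⟨hsum, fun m hkm hm hzero => hnext m (by omega) hm fun r hr hrm => ?_⟩
      rcases hr.eq_or_lt with rfl | hr
      · exact hk
      · exact hzero r hr hrm
    · have hfk := hnext k le_rfl hk fun r h₁ h₂ => absurd h₂ (not_lt.2 h₁)
      refine ⟨by omega, fun m hkm hm hzero => ?_⟩
      have := hf.alt k m hkm hk hm hzero
      linarith

theorem sum_range_eq_zero_or_one (hf : IsAltSignSeq f) (k : ℕ) :
    ∑ r ∈ range k, f r = 0 ∨ ∑ r ∈ range k, f r = 1 :=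
  (hf.sum_range_eq_zero_or_one_and_next k).1

end IsAltSignSeq

namespace AST

variable {n : ℕ} (T : AST n)

theorem isAltSignSeq_column (j : ℕ) : IsAltSignSeq (T.a · j) :=
  ⟨T.colalt j, T.coltop j⟩

theorem colsum_eq_sum_range (j : ℕ) : colsum n T j = ∑ r ∈ range (n + 1), T.a r j := by
  rw [colsum, ← Ico_add_one_right_eq_Icc, sum_Ico_eq_sub _ (by omega), sum_range_one,
    T.zero_outside 0 j (by omega), sub_zero]

theorem colsumBottom_eq_sub (i j : ℕ) :
    colsumBottom n T i j = ∑ r ∈ range (n + 1), T.a r j - ∑ r ∈ range (n - i), T.a r j := by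
  rw [colsumBottom, ← Ico_add_one_right_eq_Icc, sum_Ico_eq_sub _ (by omega)]

theorem colsumBottom_le_one (i j : ℕ) : colsumBottom n T i j ≤ 1 := by
  have hcol := T.isAltSignSeq_column j
  rw [colsumBottom_eq_sub]
  rcases hcol.sum_range_eq_zero_or_one (n + 1) with h | h <;>
    rcases hcol.sum_range_eq_zero_or_one (n - i) with h' | h' <;> omega

theorem colsum_eq_one_of_colsumBottom_eq_one {i j : ℕ} (h : colsumBottom n T i j = 1) :
    colsum n T j = 1 := by
  have hcol := T.isAltSignSeq_column j
  rw [colsumBottom_eq_sub] at h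
  rw [colsum_eq_sum_range]
  rcases hcol.sum_range_eq_zero_or_one (n + 1) with h₁ | h₁ <;>
    rcases hcol.sum_range_eq_zero_or_one (n - i) with h₂ | h₂ <;> omega

theorem sum_row_eq_one {r : ℕ} (h₁ : 1 ≤ r) (h₂ : r ≤ n) :
    ∑ j ∈ Icc 1 (2 * n - 1), T.a r j = 1 := by
  rw [← T.rowsum r h₁ h₂]
  refine (sum_subset (fun j hj => ?_) fun j hj hj' => T.zero_outside r j ?_).symm
  · simp only [mem_Icc] at hj ⊢
    omega
  · simp only [mem_Icc] at hj hj'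
    omega

theorem sum_bottom_rows {i : ℕ} (hi : i < n) :
    ∑ r ∈ Icc (n - i) n, ∑ j ∈ Icc r (2 * n - r), T.a r j = (i : ℤ) + 1 := by
  rw [sum_congr rfl fun r hr => T.rowsum r (by have := (mem_Icc.1 hr).1; omega) (mem_Icc.1 hr).2,
    sum_const, Nat.card_Icc, show n + 1 - (n - i) = i + 1 by omega, nsmul_one]
  push_cast
  rfl

theorem sum_colsumBottom {i : ℕ} (hi : i < n) :
    ∑ j ∈ Icc 1 (2 * n - 1), colsumBottom n T i j = (i : ℤ) + 1 := by
  rw [← T.sum_bottom_rows hi]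
  simp only [colsumBottom]
  rw [sum_comm]
  refine sum_congr rfl fun r hr => ?_
  obtain ⟨hr₁, hr₂⟩ := mem_Icc.1 hr
  rw [T.sum_row_eq_one (by omega) hr₂, T.rowsum r (by omega) hr₂]

end AST

theorem stmt11_general (n : ℕ) (hn : 1 ≤ n) (T : AST n) (i : ℕ) (h2 : i ≤ n - 1) :
    (∑ r ∈ Finset.Icc (n - i) n, ∑ j ∈ Finset.Icc r (2 * n - r), T.a r j) = (i : ℤ) + 1 ∧
    (i + 1 : ℕ) ≤ ((Finset.Icc 1 (2 * n - 1)).filter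
      (fun j => colsumBottom n T i j = 1)).card ∧
    (∀ j, colsumBottom n T i j = 1 → colsum n T j = 1) := by
  have hi : i < n := by omega
  refine ⟨T.sum_bottom_rows hi, ?_, fun j => T.colsum_eq_one_of_colsumBottom_eq_one⟩
  have hcount := sum_le_card_filter_eq_one (Icc 1 (2 * n - 1)) (colsumBottom n T i)
    fun j _ => T.colsumBottom_le_one i j
  rw [T.sum_colsumBottom hi] at hcount
  exact_mod_cast hcount

/-- For each `1 ≤ i ≤ n−1`, the bottom `i+1` rows `T_i` of an AST `T` of
order `n` have entry sum `i+1`, at least `i+1` columns of `T_i` sum to `1`, and every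
column of `T_i` with sum `1` is a `1`-column of `T`. -/
theorem stmt11 (n : ℕ) (hn : 1 ≤ n) (T : AST n) (i : ℕ) (h1 : 1 ≤ i) (h2 : i ≤ n - 1) :
    (∑ r ∈ Finset.Icc (n - i) n, ∑ j ∈ Finset.Icc r (2 * n - r), T.a r j) = (i : ℤ) + 1 ∧
    (i + 1 : ℕ) ≤ ((Finset.Icc 1 (2 * n - 1)).filter
      (fun j => colsumBottom n T i j = 1)).card ∧
    (∀ j, colsumBottom n T i j = 1 → colsum n T j = 1) :=
  stmt11_general n hn T i h2
end

section
/- For any positive integer n, the sum over all rows in the central column of an odd OOSASM triangle of order n equals 0 if n is even and 1 if n is odd; consequently an odd OOSASM triangle of order n has exactly ⌊n/2⌋ 1-columns other than the central column. -/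
open Finset

/-- The nonzero entries of a list alternate in sign. -/
def altList (l : List ℤ) : Prop :=
  List.Chain' (fun x y => x = -y) (l.filter (fun x => decide (x ≠ 0)))

/-- For a triangular array `a` of order `n` and `j ∈ {0,…,n−1}`, the concatenation of
column `j` (downwards), row `j+1` (left to right, columns `j+1,…,2n−j−1`) and
column `2n−j` (upwards). -/
def oseq (n : ℕ) (a : ℕ → ℕ → ℤ) (j : ℕ) : List ℤ :=
  ((List.range j).map (fun t => a (t + 1) j)) ++
    ((List.range (2 * n - 2 * j - 1)).map (fun t => a (j + 1) (j + 1 + t))) ++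
    ((List.range j).map (fun t => a (j - t) (2 * n - j)))

/-- The central column (column `n`) of a triangular array of order `n`, top to bottom. -/
def centerCol (n : ℕ) (a : ℕ → ℕ → ℤ) : List ℤ :=
  (List.range n).map (fun t => a (t + 1) n)

/-- An odd OOSASM triangle of order `n`: a triangular array (rows `i = 1,…,n`, row `i`
occupying columns `j = i,…,2n−i`, entries in `{−1,0,1}`, zero outside the triangle)
such that for each `j ∈ {0,…,n−1}` the concatenated sequence of column `j`, row `j+1`
and column `2n−j` has alternating nonzero entries summing to `1`, and in the central
column the nonzero entries alternate with topmost nonzero entry `1`. -/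
structure OOSASMTri (n : ℕ) where
  a : ℕ → ℕ → ℤ
  zero_outside : ∀ i j, ¬(1 ≤ i ∧ i ≤ n ∧ i ≤ j ∧ j ≤ 2 * n - i) → a i j = 0
  entries : ∀ i j, a i j = -1 ∨ a i j = 0 ∨ a i j = 1
  seqAlt : ∀ j, j < n → altList (oseq n a j)
  seqSum : ∀ j, j < n → (oseq n a j).sum = 1
  centerAlt : altList (centerCol n a)
  centerTop : ∀ x, ((centerCol n a).filter (fun y => decide (y ≠ 0))).head? = some x → x = 1

/-- The sum of the entries of column `j`. -/
def ocolsum (n : ℕ) (T : OOSASMTri n) (j : ℕ) : ℤ := ∑ i ∈ Finset.Icc 1 n, T.a i j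

/-!
Every column sum lies in `{0, 1}`: a column to the left of the centre is an initial segment
and a column to the right a final segment of one of the alternating sequences with sum `1`,
and such segments have sum `0` or `1`; the central column alternates with top entry `1`.
Summing the `n` sequences counts every entry twice except those of the central column, so
`2 S = n + c` for the total sum `S` and the central column sum `c`. Hence `c ≡ n (mod 2)`, and
the number of `1`-columns other than the central one is `S - c = (n - c) / 2 = ⌊n / 2⌋`.
-/

theorem List.sum_map_range {M : Type*} [AddCommMonoid M] (f : ℕ → M) (k : ℕ) :
    ((List.range k).map f).sum = ∑ t ∈ Finset.range k, f t := by
  rw [Finset.sum, Finset.range_val, Multiset.range, Multiset.map_coe, Multiset.sum_coe]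

theorem List.sum_filter_ne_zero {M : Type*} [AddMonoid M] [DecidableEq M] (l : List M) :
    (l.filter (fun x => decide (x ≠ 0))).sum = l.sum := by
  induction l with
  | nil => rfl
  | cons a l ih =>
    rw [List.filter_cons]
    by_cases ha : a = 0
    · rw [if_neg (by simp [ha]), ih, List.sum_cons, ha, zero_add]
    · rw [if_pos (by simpa using ha), List.sum_cons, List.sum_cons, ih]

theorem List.IsChain.sum_eq_zero_or_head? {α : Type*} [AddGroup α] :
    ∀ {l : List α}, l.IsChain (fun x y => x = -y) → l.sum = 0 ∨ l.head? = some l.sum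
  | [], _ => Or.inl rfl
  | [_], _ => Or.inr (by simp)
  | a :: b :: t, h => by
    obtain ⟨hab, hbt⟩ := List.isChain_cons_cons.mp h
    have hsum : (a :: b :: t).sum = t.sum := by simp [hab]
    rw [hsum]
    cases t with
    | nil => exact Or.inl rfl
    | cons c t =>
      obtain ⟨hbc, hct⟩ := List.isChain_cons_cons.mp hbt
      rcases List.IsChain.sum_eq_zero_or_head? hct with h0 | hhead
      · exact Or.inl h0
      · simp only [List.head?_cons, Option.some.injEq] at hhead ⊢
        rw [hab, hbc, neg_neg]
        exact Or.inr hhead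

theorem Finset.sum_range_two_mul_add_one {M : Type*} [AddCommMonoid M] (f : ℕ → M) (n : ℕ) :
    ∑ k ∈ range (2 * n + 1), f k = ∑ j ∈ range n, f j + f n + ∑ j ∈ range n, f (2 * n - j) := by
  rw [show 2 * n + 1 = n + 1 + n by omega, sum_range_add, sum_range_succ,
    ← sum_range_reflect (fun t => f (n + 1 + t)) n]
  congr 1
  exact sum_congr rfl fun j hj => congrArg f (by simp only [mem_range] at hj; omega)

namespace altList

theorem reverse {l : List ℤ} (h : altList l) : altList l.reverse := by
  unfold altList at *
  rw [List.filter_reverse, List.Chain', List.isChain_reverse]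
  exact h.imp fun x y hxy => by rw [hxy, neg_neg]

theorem append_left {p q : List ℤ} (h : altList (p ++ q)) : altList p := by
  unfold altList at *
  rw [List.filter_append] at h
  exact List.IsChain.left_of_append h

theorem sum_eq_zero_or_one {l : List ℤ} (h : altList l)
    (htop : ∀ x, (l.filter (fun y => decide (y ≠ 0))).head? = some x → x = 1) :
    l.sum = 0 ∨ l.sum = 1 := by
  rw [← List.sum_filter_ne_zero]
  rcases List.IsChain.sum_eq_zero_or_head? h with h0 | hhead
  · exact Or.inl h0
  · exact Or.inr (htop _ hhead)

theorem sum_left_eq_zero_or_one {p q : List ℤ} (h : altList (p ++ q)) (hs : (p ++ q).sum = 1) :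
    p.sum = 0 ∨ p.sum = 1 := by
  refine h.append_left.sum_eq_zero_or_one fun x hx => ?_
  rcases List.IsChain.sum_eq_zero_or_head? h with h0 | hhead
  · rw [List.sum_filter_ne_zero, hs] at h0
    exact absurd h0 one_ne_zero
  · rw [List.sum_filter_ne_zero, hs, List.filter_append, List.head?_append, hx] at hhead
    exact Option.some.inj hhead

theorem sum_right_eq_zero_or_one {p q : List ℤ} (h : altList (p ++ q)) (hs : (p ++ q).sum = 1) :
    q.sum = 0 ∨ q.sum = 1 := by
  have hrev := h.reverse
  rw [List.reverse_append] at hrev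
  rw [← List.sum_reverse]
  exact hrev.sum_left_eq_zero_or_one (by rw [← List.reverse_append, List.sum_reverse, hs])

end altList

namespace OOSASMTri

variable {n : ℕ} (T : OOSASMTri n)

theorem ocolsum_eq_sum_range (j : ℕ) : ocolsum n T j = ∑ t ∈ range n, T.a (t + 1) j := by
  rw [ocolsum, range_eq_Ico, sum_Ico_add' (fun i => T.a i j), zero_add, Ico_add_one_right_eq_Icc]

theorem ocolsum_eq_zero {j : ℕ} (hj : j = 0 ∨ 2 * n ≤ j) : ocolsum n T j = 0 := by
  rw [ocolsum_eq_sum_range]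
  exact sum_eq_zero fun t ht => T.zero_outside _ _ (by simp only [mem_range] at ht; omega)

theorem sum_range_eq_ocolsum {j c : ℕ} (hj : j ≤ n) (hc : ∀ i, j < i → T.a i c = 0) :
    ∑ t ∈ range j, T.a (t + 1) c = ocolsum n T c := by
  rw [ocolsum_eq_sum_range]
  exact sum_subset (range_subset_range.mpr hj) fun t _ ht => hc _ (by simpa using ht)

theorem sum_colDown {j : ℕ} (hj : j ≤ n) :
    ((List.range j).map fun t => T.a (t + 1) j).sum = ocolsum n T j := by
  rw [List.sum_map_range]
  exact T.sum_range_eq_ocolsum hj fun i hi => T.zero_outside _ _ (by omega)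

theorem sum_colUp {j : ℕ} (hj : j ≤ n) :
    ((List.range j).map fun t => T.a (j - t) (2 * n - j)).sum = ocolsum n T (2 * n - j) := by
  rw [List.sum_map_range, ← T.sum_range_eq_ocolsum hj fun i hi => T.zero_outside _ _ (by omega),
    ← sum_range_reflect]
  exact sum_congr rfl fun t ht => by simp only [mem_range] at ht; congr 1; omega

theorem sum_row (j : ℕ) :
    ((List.range (2 * n - 2 * j - 1)).map fun t => T.a (j + 1) (j + 1 + t)).sum
      = ∑ k ∈ range (2 * n + 1), T.a (j + 1) k := by
  rw [List.sum_map_range, range_eq_Ico, sum_Ico_add (fun k => T.a (j + 1) k), zero_add]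
  refine sum_subset (fun k hk => ?_) fun k _ hk => T.zero_outside _ _ ?_
  · simp only [mem_Ico, mem_range] at hk ⊢
    omega
  · simp only [mem_Ico] at hk
    omega

theorem sum_oseq {j : ℕ} (hj : j ≤ n) :
    (oseq n T.a j).sum
      = ocolsum n T j + ∑ k ∈ range (2 * n + 1), T.a (j + 1) k + ocolsum n T (2 * n - j) := by
  rw [oseq, List.sum_append, List.sum_append, T.sum_colDown hj, T.sum_row, T.sum_colUp hj]

theorem sum_centerCol : (centerCol n T.a).sum = ocolsum n T n := by
  rw [centerCol, List.sum_map_range, ocolsum_eq_sum_range]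

theorem two_mul_sum_ocolsum :
    2 * ∑ k ∈ range (2 * n + 1), ocolsum n T k = n + ocolsum n T n := by
  have hseq : ∑ j ∈ range n, (oseq n T.a j).sum = n := by
    rw [sum_congr rfl fun j hj => T.seqSum j (mem_range.mp hj)]
    simp
  have hrows : ∑ j ∈ range n, ∑ k ∈ range (2 * n + 1), T.a (j + 1) k
      = ∑ k ∈ range (2 * n + 1), ocolsum n T k := by
    rw [sum_comm]
    exact sum_congr rfl fun k _ => (T.ocolsum_eq_sum_range k).symm
  rw [sum_congr rfl fun j hj => T.sum_oseq (mem_range.mp hj).le, sum_add_distrib,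
    sum_add_distrib, hrows] at hseq
  linarith [sum_range_two_mul_add_one (ocolsum n T) n]

theorem ocolsum_eq_zero_or_one (j : ℕ) : ocolsum n T j = 0 ∨ ocolsum n T j = 1 := by
  rcases lt_trichotomy j n with hj | rfl | hj
  · have halt := T.seqAlt j hj
    have hsum := T.seqSum j hj
    rw [oseq, List.append_assoc] at halt hsum
    rw [← T.sum_colDown hj.le]
    exact halt.sum_left_eq_zero_or_one hsum
  · rw [← sum_centerCol]
    exact T.centerAlt.sum_eq_zero_or_one T.centerTop
  · by_cases h2n : 2 * n ≤ j
    · exact Or.inl (T.ocolsum_eq_zero (Or.inr h2n))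
    obtain ⟨i, hi, rfl⟩ : ∃ i < n, j = 2 * n - i := ⟨2 * n - j, by omega, by omega⟩
    have halt := T.seqAlt i hi
    have hsum := T.seqSum i hi
    rw [oseq] at halt hsum
    rw [← T.sum_colUp hi.le]
    exact halt.sum_right_eq_zero_or_one hsum

theorem card_oneColumns_ne_center :
    (((Icc 1 (2 * n - 1)).filter fun j => j ≠ n ∧ ocolsum n T j = 1).card : ℤ)
      = ∑ k ∈ range (2 * n + 1), ocolsum n T k - ocolsum n T n := by
  have hinner : ∀ j, ocolsum n T j = 1 → 1 ≤ j ∧ j ≤ 2 * n - 1 := fun j h => by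
    by_contra hj
    rw [T.ocolsum_eq_zero (by omega)] at h
    exact zero_ne_one h
  have hset : ((Icc 1 (2 * n - 1)).filter fun j => j ≠ n ∧ ocolsum n T j = 1)
      = ((range (2 * n + 1)).erase n).filter fun j => ocolsum n T j = 1 := by
    ext j
    simp only [mem_filter, mem_Icc, mem_erase, mem_range]
    constructor
    · rintro ⟨hj, hjn, h1⟩
      exact ⟨⟨hjn, by omega⟩, h1⟩
    · rintro ⟨⟨hjn, -⟩, h1⟩
      exact ⟨hinner j h1, hjn, h1⟩
  rw [hset, ← sum_boole, ← sum_erase_eq_sub (mem_range.mpr (by omega))]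
  refine sum_congr rfl fun j _ => ?_
  rcases T.ocolsum_eq_zero_or_one j with h | h <;> simp [h]

end OOSASMTri

theorem stmt12_general (n : ℕ) (T : OOSASMTri n) :
    ocolsum n T n = (if Even n then 0 else 1) ∧
    ((Finset.Icc 1 (2 * n - 1)).filter
      (fun j => j ≠ n ∧ ocolsum n T j = 1)).card = n / 2 := by
  have hdouble := T.two_mul_sum_ocolsum
  have hcard := T.card_oneColumns_ne_center
  have hcenter := T.ocolsum_eq_zero_or_one n
  generalize ∑ k ∈ range (2 * n + 1), ocolsum n T k = S at hdouble hcard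
  generalize ocolsum n T n = c at hdouble hcard hcenter ⊢
  refine ⟨?_, by omega⟩
  split_ifs with he <;> rw [Nat.even_iff] at he <;> omega

/-- The central column sum of an odd OOSASM triangle of order `n` is `0`
if `n` is even and `1` if `n` is odd; consequently there are exactly `⌊n/2⌋`
`1`-columns other than the central column. -/
theorem stmt12 (n : ℕ) (hn : 1 ≤ n) (T : OOSASMTri n) :
    ocolsum n T n = (if Even n then 0 else 1) ∧
    ((Finset.Icc 1 (2 * n - 1)).filter
      (fun j => j ≠ n ∧ ocolsum n T j = 1)).card = n / 2 :=
  stmt12_general n T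
end

section
/- For every integer n ≥ 1, the number of strictly increasing sequences 0 ≤ j_1 < j_2 < ... < j_{n-1} ≤ 2n−3 satisfying the Catalan-type condition |[n−1−i, n−2+i] ∩ {j_1,...,j_{n-1}}| ≥ i for all i ∈ {1,...,n−1}, equals the n-th Catalan number C_n = binom(2n,n)/(n+1). -/
/-!
Write `n = m + 1`. Listing the positions `0, …, 2m - 1` centre-outwards as
`m, m - 1, m + 1, m - 2, …` turns the window `[m - i, m - 1 + i]` into the first `2i` positions,
so the condition says that every prefix of even length `2i` contains at least `i` chosen
positions. Reading chosen positions as up-steps and the others as down-steps, the word `U w D` is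
then a Dyck word of semilength `m + 1`: its prefix `U w_{<s}` has `1 + u` up-steps and `s - u`
down-steps, and for `s = 2i` the inequality `s - u ≤ 1 + u` is exactly `i ≤ u`. Conversely every
Dyck word of semilength `m + 1` has this form, and these are counted by `catalan (m + 1)`.
-/

open Finset DyckStep

section Steps

variable {k : ℕ}

def stepsOfFinset (T : Finset (Fin k)) : List DyckStep :=
  List.ofFn fun j => if j ∈ T then U else D

def finsetOfSteps (k : ℕ) (w : List DyckStep) : Finset (Fin k) :=
  {j | w[j.val]? = some U}

@[simp]
lemma length_stepsOfFinset (T : Finset (Fin k)) : (stepsOfFinset T).length = k := by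
  simp [stepsOfFinset]

lemma finsetOfSteps_stepsOfFinset (T : Finset (Fin k)) :
    finsetOfSteps k (stepsOfFinset T) = T := by
  ext j
  by_cases hj : j ∈ T <;> simp [finsetOfSteps, stepsOfFinset, hj]

lemma stepsOfFinset_finsetOfSteps {w : List DyckStep} (hw : w.length = k) :
    stepsOfFinset (finsetOfSteps k w) = w := by
  refine List.ext_getElem (by simp [hw]) fun i hi hiw => ?_
  rcases w[i].dichotomy with h | h <;>
    simp [stepsOfFinset, finsetOfSteps, List.getElem?_eq_getElem hiw, h]

lemma count_U_add_count_D (l : List DyckStep) : l.count U + l.count D = l.length := by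
  induction l with
  | nil => rfl
  | cons s l ih => cases s <;> simp <;> omega

lemma count_U_take_stepsOfFinset (T : Finset (Fin k)) (t : ℕ) :
    ((stepsOfFinset T).take t).count U = #{j ∈ T | j.val < t} := by
  induction t with
  | zero => simp
  | succ t ih =>
    by_cases ht : t < k
    · have hfilter : ({j ∈ T | j.val < t + 1} : Finset (Fin k)) =
          {j ∈ T | j.val < t} ∪ {j ∈ T | j = ⟨t, ht⟩} := by
        ext j; simp only [mem_union, mem_filter, Fin.ext_iff, Nat.lt_add_one_iff_lt_or_eq]; tauto
      rw [List.take_add_one, List.count_append, ih, hfilter, card_union_of_disjoint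
        (disjoint_filter.mpr fun j _ hj hjt => by simp [hjt] at hj)]
      by_cases htT : (⟨t, ht⟩ : Fin k) ∈ T <;> simp [stepsOfFinset, ht, htT, filter_eq']
    · have hlen : (stepsOfFinset T).length ≤ t := by simp; omega
      rw [List.take_of_length_le hlen] at ih
      rw [List.take_of_length_le (by omega), ih]
      congr 1; refine filter_congr fun j _ => ?_; omega

lemma count_take_succ_nest (T : Finset (Fin k)) {s : ℕ} (hs : s ≤ k) :
    ((U :: stepsOfFinset T ++ [D]).take (s + 1)).count U = #{j ∈ T | j.val < s} + 1 ∧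
    ((U :: stepsOfFinset T ++ [D]).take (s + 1)).count D = s - #{j ∈ T | j.val < s} := by
  have htake : (U :: stepsOfFinset T ++ [D]).take (s + 1) = U :: (stepsOfFinset T).take s :=
    List.take_append_of_le_length (by simpa using hs)
  have hsum := count_U_add_count_D ((stepsOfFinset T).take s)
  rw [List.length_take, length_stepsOfFinset, count_U_take_stepsOfFinset] at hsum
  rw [htake, List.count_cons_self, List.count_cons_of_ne (by decide),
    count_U_take_stepsOfFinset]
  exact ⟨rfl, by omega⟩

lemma count_nest (T : Finset (Fin k)) :
    (U :: stepsOfFinset T ++ [D]).count U = #T + 1 ∧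
    (U :: stepsOfFinset T ++ [D]).count D = k - #T + 1 := by
  have hU := count_U_take_stepsOfFinset T k
  rw [List.take_of_length_le (by simp), filter_true_of_mem fun j _ => j.2] at hU
  have hsum := count_U_add_count_D (stepsOfFinset T)
  rw [length_stepsOfFinset] at hsum
  simp only [List.count_append, List.count_cons, List.count_nil, beq_iff_eq, reduceCtorEq,
    if_true, if_false]
  omega

end Steps

def IsBallot {m : ℕ} (T : Finset (Fin (2 * m))) : Prop :=
  #T = m ∧ ∀ i ∈ Icc 1 m, i ≤ #{j ∈ T | j.val < 2 * i}

instance {m : ℕ} (T : Finset (Fin (2 * m))) : Decidable (IsBallot T) :=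
  inferInstanceAs (Decidable (_ ∧ _))

namespace IsBallot

variable {m : ℕ} {T : Finset (Fin (2 * m))}

lemma sub_card_le_card_add_one (hT : IsBallot T) {s : ℕ} (hs : s ≤ 2 * m) :
    s - #{j ∈ T | j.val < s} ≤ #{j ∈ T | j.val < s} + 1 := by
  rcases (s / 2).eq_zero_or_pos with h0 | hpos
  · omega
  · have hi := hT.2 (s / 2) (mem_Icc.2 ⟨hpos, by omega⟩)
    have hmono : #{j ∈ T | j.val < 2 * (s / 2)} ≤ #{j ∈ T | j.val < s} :=
      card_le_card fun j hj => by
        rw [mem_filter] at hj ⊢; exact ⟨hj.1, by omega⟩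
    omega

def toDyckWord (hT : IsBallot T) : DyckWord where
  toList := U :: stepsOfFinset T ++ [D]
  count_U_eq_count_D := by
    obtain ⟨hU, hD⟩ := count_nest T
    rw [hU, hD, hT.1]; omega
  count_D_le_count_U t := by
    rcases t with _ | s
    · simp
    by_cases hs : s ≤ 2 * m
    · obtain ⟨hU, hD⟩ := count_take_succ_nest T hs
      rw [hU, hD]; exact hT.sub_card_le_card_add_one hs
    · obtain ⟨hU, hD⟩ := count_nest T
      rw [List.take_of_length_le (by simp; omega), hU, hD, hT.1]; omega

lemma semilength_toDyckWord (hT : IsBallot T) : hT.toDyckWord.semilength = m + 1 := by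
  rw [DyckWord.semilength, toDyckWord, (count_nest T).1, hT.1]

end IsBallot

lemma isBallot_of_nest_eq {m : ℕ} {T : Finset (Fin (2 * m))} {p : DyckWord}
    (hp : p.semilength = m + 1) (h : U :: stepsOfFinset T ++ [D] = p.toList) : IsBallot T := by
  refine ⟨?_, fun i hi => ?_⟩
  · have := (count_nest T).1
    rw [h, ← DyckWord.semilength, hp] at this
    omega
  · rw [mem_Icc] at hi
    have hprefix := p.count_D_le_count_U (2 * i + 1)
    obtain ⟨hU, hD⟩ := count_take_succ_nest T (show 2 * i ≤ 2 * m by omega)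
    rw [← h, hU, hD] at hprefix
    omega

lemma nest_finsetOfSteps_dropLast_tail {m : ℕ} {p : DyckWord} (hp : p.semilength = m + 1) :
    U :: stepsOfFinset (finsetOfSteps (2 * m) p.toList.dropLast.tail) ++ [D] = p.toList := by
  have hp0 : p ≠ 0 := by rintro rfl; simp at hp
  have hlen : p.toList.dropLast.tail.length = 2 * m := by
    have := p.two_mul_semilength_eq_length; simp; omega
  rw [stepsOfFinset_finsetOfSteps hlen, DyckWord.cons_tail_dropLast_concat hp0]

def isBallotEquiv (m : ℕ) :
    {T : Finset (Fin (2 * m)) // IsBallot T} ≃ {p : DyckWord // p.semilength = m + 1} where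
  toFun T := ⟨T.2.toDyckWord, T.2.semilength_toDyckWord⟩
  invFun p := ⟨finsetOfSteps (2 * m) p.1.toList.dropLast.tail,
    isBallot_of_nest_eq p.2 (nest_finsetOfSteps_dropLast_tail p.2)⟩
  left_inv T := by
    ext1
    simp only [IsBallot.toDyckWord, List.dropLast_concat, List.tail_cons,
      finsetOfSteps_stepsOfFinset]
  right_inv p := by
    ext1; ext1
    exact nest_finsetOfSteps_dropLast_tail p.2

theorem card_isBallot (m : ℕ) : #{T : Finset (Fin (2 * m)) | IsBallot T} = catalan (m + 1) := by
  rw [← Fintype.card_subtype, ← DyckWord.card_dyckWord_semilength_eq_catalan]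
  exact Fintype.card_congr (isBallotEquiv m)

def centreOut (m : ℕ) : Fin (2 * m) ≃ Fin (2 * m) where
  toFun j := ⟨if j.val % 2 = 0 then m + j / 2 else m - 1 - j / 2, by split <;> omega⟩
  invFun x := ⟨if m ≤ x.val then 2 * (x - m) else 2 * (m - x) - 1, by split <;> omega⟩
  left_inv j := by ext; dsimp only; split_ifs <;> omega
  right_inv x := by ext; dsimp only; split_ifs <;> omega

lemma mem_window_centreOut_iff {m : ℕ} (i : ℕ) (j : Fin (2 * m)) :
    m - i ≤ (centreOut m j).val ∧ (centreOut m j).val ≤ m - 1 + i ↔ j.val < 2 * i := by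
  simp only [centreOut, Equiv.coe_fn_mk]; split <;> omega

lemma card_window_eq_card_isBallot (m : ℕ) :
    ((univ : Finset (Finset (Fin (2 * m)))).filter fun S => S.card = m ∧
        ∀ i ∈ Icc 1 m,
          i ≤ (S.filter fun p : Fin (2 * m) =>
            m - i ≤ (p : ℕ) ∧ (p : ℕ) ≤ m - 1 + i).card).card =
      #{T : Finset (Fin (2 * m)) | IsBallot T} := by
  symm
  refine card_equiv (centreOut m).finsetCongr fun T => ?_
  rw [mem_filter, mem_filter]
  simp only [mem_univ, true_and, IsBallot, Equiv.finsetCongr_apply, card_map,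
    filter_map, Function.comp_def, Equiv.coe_toEmbedding, mem_window_centreOut_iff]

theorem stmt13_general (n : ℕ) :
    ((Finset.univ : Finset (Finset (Fin (2 * n - 2)))).filter
      (fun S => S.card = n - 1 ∧
        ∀ i ∈ Finset.Icc 1 (n - 1),
          i ≤ (S.filter (fun p : Fin (2 * n - 2) => n - 1 - i ≤ (p : ℕ) ∧ (p : ℕ) ≤ n - 2 + i)).card)).card
    = catalan n := by
  cases n with
  | zero => simp [Subsingleton.elim _ (∅ : Finset (Fin 0))]
  | succ m =>
    -- `2 * (m + 1) - 2` and `m + 1 - 2` reduce definitionally to `2 * m` and `m - 1`.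
    exact (card_window_eq_card_isBallot m).trans (card_isBallot m)

/-- The number of `(n−1)`-element subsets `{j_1 < … < j_{n-1}}` of
`{0,…,2n−3}` with `|[n−1−i, n−2+i] ∩ {j_1,…,j_{n-1}}| ≥ i` for all `1 ≤ i ≤ n−1`
equals the `n`-th Catalan number. -/
theorem stmt13 (n : ℕ) (hn : 1 ≤ n) :
    ((Finset.univ : Finset (Finset (Fin (2 * n - 2)))).filter
      (fun S => S.card = n - 1 ∧
        ∀ i ∈ Finset.Icc 1 (n - 1),
          i ≤ (S.filter (fun p : Fin (2 * n - 2) => n - 1 - i ≤ (p : ℕ) ∧ (p : ℕ) ≤ n - 2 + i)).card)).card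
    = catalan n :=
  stmt13_general n
end
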